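/- Correspondence is preserved by simultaneous reset: if ν corresponds with (r, α, t) and R is a set of clocks with z ∈ R iff x_p ∈ R, then ν[R] corresponds with (r[R∖{x_p}], α[R∖{x_p}], t') where t' = 0 if x_p ∈ R and t' = t otherwise. -/
import Mathlib


inductive Iota | LESS | MORE | EXACT
deriving DecidableEq

open Classical in
noncomputable def iota {C : Type*} (z : C) (r : Set (C → ℝ)) (α : C → ℕ) : Iota :=
  if α z = 1 ∧ ¬ (∀ ν ∈ r, ν z = 1) then .LESS
  else if α z = 0 ∧ ¬ (∀ ν ∈ r, ν z = 0) then .MORE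
  else .EXACT

noncomputable def fval {C : Type*} (z : C) (r : Set (C → ℝ)) (α : C → ℕ) : ℕ :=
  if iota z r α = .LESS then 1 else 0

/-- Correspondence of a valuation (split into its restriction `νhat` to the
nonparametric clocks and the value `νp` of the parametric clock) with `(r,α,t)`. -/
noncomputable def Corr {C : Type*} (z : C) (r : Set (C → ℝ)) (α : C → ℕ)
    (t : ℕ) (νhat : C → ℝ) (νp : ℝ) : Prop :=
  νhat ∈ r ∧ (⌊νp⌋ + (fval z r α : ℤ) = (t : ℤ)) ∧
  ((∃ n : ℕ, νp = n) ↔ iota z r α = .EXACT)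

open Classical in
/-- Reset of a valuation on a set `S` of clocks. -/
noncomputable def resetV {C : Type*} (ν : C → ℝ) (S : Set C) : C → ℝ :=
  fun c => if c ∈ S then 0 else ν c

open Classical in
/-- Reset of a corner point on a set `S` of clocks. -/
noncomputable def resetCp {C : Type*} (α : C → ℕ) (S : Set C) : C → ℕ :=
  fun c => if c ∈ S then 0 else α c

/-- Reset of a region on a set `S` of clocks (pointwise image). -/
noncomputable def resetRegion {C : Type*} (r : Set (C → ℝ)) (S : Set C) :
    Set (C → ℝ) := (fun ν => resetV ν S) '' r


lemma iota_congr {C : Type*} (z : C) (r r' : Set (C → ℝ)) (α α' : C → ℕ)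
    (h1 : α' z = α z)
    (h2 : (∀ ν ∈ r', ν z = 1) ↔ (∀ ν ∈ r, ν z = 1))
    (h3 : (∀ ν ∈ r', ν z = 0) ↔ (∀ ν ∈ r, ν z = 0)) :
    iota z r' α' = iota z r α := by
  classical
  unfold iota
  exact if_congr (and_congr (by rw [h1]) (not_congr h2)) rfl
    (if_congr (and_congr (by rw [h1]) (not_congr h3)) rfl rfl)

/-- Correspondence is preserved by simultaneous reset: `S` is the set of
nonparametric clocks being reset (`R ∖ {x_p}`), `xpIn` records whether the
parametric clock `x_p` belongs to the reset set `R`, and `z ∈ S ↔ x_p ∈ R`. -/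
theorem corr_reset {C : Type*} (z : C) (r : Set (C → ℝ)) (α : C → ℕ) (t : ℕ)
    (νhat : C → ℝ) (νp : ℝ) (hcorr : Corr z r α t νhat νp)
    (S : Set C) (xpIn : Prop) [Decidable xpIn] (hz : z ∈ S ↔ xpIn) :
    Corr z (resetRegion r S) (resetCp α S) (if xpIn then 0 else t)
      (resetV νhat S) (if xpIn then 0 else νp) := by
  obtain ⟨hmem, hfloor, hexact⟩ := hcorr
  by_cases hx : xpIn
  · simp only [if_pos hx]
    have hzS : z ∈ S := hz.mpr hx
    have hi : iota z (resetRegion r S) (resetCp α S) = .EXACT := by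
      have hα : resetCp α S z = 0 := by simp [resetCp, hzS]
      have hall : ∀ ν ∈ resetRegion r S, ν z = 0 := by
        rintro ν ⟨μ, _, rfl⟩; simp [resetV, hzS]
      have h1 : ¬(resetCp α S z = 1 ∧ ¬∀ ν ∈ resetRegion r S, ν z = 1) := by
        rintro ⟨h1, -⟩; rw [hα] at h1; exact one_ne_zero h1.symm
      have h0 : ¬(resetCp α S z = 0 ∧ ¬∀ ν ∈ resetRegion r S, ν z = 0) :=
        fun h => h.2 hall
      rw [iota, if_neg h1, if_neg h0]
    refine ⟨⟨νhat, hmem, rfl⟩, ?_, ?_⟩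
    · simp [fval, hi]
    · simp [hi]
      exact ⟨0, by simp⟩
  · simp only [if_neg hx]
    have hzS : z ∉ S := fun h => hx (hz.mp h)
    have hi : iota z (resetRegion r S) (resetCp α S) = iota z r α := by
      apply iota_congr
      · simp [resetCp, hzS]
      · constructor
        · intro h ν hν; have := h (resetV ν S) ⟨ν, hν, rfl⟩; simpa [resetV, hzS] using this
        · rintro h ν ⟨μ, hμ, rfl⟩; simpa [resetV, hzS] using h μ hμ
      · constructor
        · intro h ν hν; have := h (resetV ν S) ⟨ν, hν, rfl⟩; simpa [resetV, hzS] using this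
        · rintro h ν ⟨μ, hμ, rfl⟩; simpa [resetV, hzS] using h μ hμ
    refine ⟨⟨νhat, hmem, rfl⟩, ?_, ?_⟩
    · simpa [fval, hi] using hfloor
    · simpa [hi] using hexact
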